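/- arXiv:0807.3907 — 8 statements merged into one kernel-verified Lean document; each statement's English description precedes it below -/
import Mathlib

section
/- Let F be a finite subset of ℤ^n, let P = conv(F) be its convex hull, and let W : ℝ^n → ℝ^d be a linear map. If u is an extreme point of the image polytope W(P), then every extreme point of the fiber (W^{-1}u) ∩ P belongs to F; in particular, every extreme point of the fiber is an integer point. -/
/-- If `F ⊆ ℤⁿ` is finite, `P = conv F`, and `u` is an extreme point of the
image `W(P)`, then every extreme point of the fiber `{x | Wx = u} ∩ P`
belongs to `F`; in particular it is an integer point. -/
theorem extreme_points_of_fiber_are_integral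
    (n d : ℕ) (F : Set (Fin n → ℝ)) (hFfin : F.Finite)
    (hFint : ∀ x ∈ F, ∀ j, ∃ m : ℤ, x j = (m : ℝ))
    (W : (Fin n → ℝ) →ₗ[ℝ] (Fin d → ℝ)) (u : Fin d → ℝ)
    (hu : u ∈ (W '' (convexHull ℝ F)).extremePoints ℝ) :
    ∀ x ∈ ({x | W x = u} ∩ convexHull ℝ F).extremePoints ℝ,
      x ∈ F ∧ ∀ j, ∃ m : ℤ, x j = (m : ℝ) := by
  intro x hx
  rw [mem_extremePoints] at hx hu
  obtain ⟨⟨hxW, hxP⟩, hxext⟩ := hx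
  have hxF : x ∈ F := by
    apply extremePoints_convexHull_subset (𝕜 := ℝ)
    rw [mem_extremePoints]
    refine ⟨hxP, fun y hy z hz hseg => ?_⟩
    -- W y, W z ∈ W '' P and u ∈ openSegment (W y) (W z)
    have hWseg : W x ∈ openSegment ℝ (W y) (W z) := by
      have h := image_openSegment ℝ W.toAffineMap y z
      simp only [LinearMap.coe_toAffineMap] at h
      rw [← h]
      exact ⟨x, hseg, rfl⟩
    rw [hxW] at hWseg
    have := hu.2 (W y) ⟨y, hy, rfl⟩ (W z) ⟨z, hz, rfl⟩ hWseg
    exact hxext y ⟨this.1, hy⟩ z ⟨this.2, hz⟩ hseg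
  exact ⟨hxF, hFint x hxF⟩
end

section
/- Let P = {x ∈ ℝ^n : Ax ≤ b} be a bounded polyhedron given by A ∈ ℝ^{m×n} and b ∈ ℝ^m, let W : ℝ^n → ℝ^d be a linear map, and let u be an extreme point of the image polytope W(P). For each row index 1 ≤ i ≤ m, define z_i := min { A_{i·}x : x ∈ P, Wx = u }. Then the fiber of u satisfies (W^{-1}u) ∩ P = { x ∈ ℝ^n : A_{i·}x ≤ b_i for every i with z_i < b_i, and A_{i·}x = b_i for every i with z_i = b_i }. -/
/-!
If `x` satisfies the system, averaging minimisers of the `A_{i·}` over the fiber gives a point `y`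
of the fiber that is strict in every constraint with `z_i < b_i`. Every constraint tight at `y` is
then tight at `x`, so `y` can be pushed slightly beyond itself away from `x`, to
`y + ε (y - x) ∈ P`. Now `u = W y` lies in the open segment between `W x` and `W (y + ε (y - x))`,
both in `W(P)`, and extremality of `u` forces `W x = u`.
-/

open Filter Topology Matrix

section

variable {𝕜 E : Type*} [Field 𝕜] [LinearOrder 𝕜] [IsStrictOrderedRing 𝕜] [AddCommGroup E]
  [Module 𝕜 E]

theorem mem_openSegment_add_smul_sub (x y : E) {ε : 𝕜} (hε : 0 < ε) :
    y ∈ openSegment 𝕜 x (y + ε • (y - x)) := by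
  have hε' : 0 < 1 + ε := by linarith
  refine ⟨ε / (1 + ε), 1 / (1 + ε), by positivity, by positivity, by field_simp; ring, ?_⟩
  match_scalars
  · field_simp
    ring
  · field_simp

end

section

variable {ι E : Type*} [AddCommGroup E] [Module ℝ E]

theorem Convex.exists_forall_lt_of_exists_lt [Finite ι] {S : Set E} (hS : Convex ℝ S)
    (hne : S.Nonempty) {f : ι → E → ℝ} (hf : ∀ i, ConvexOn ℝ S (f i)) {c : ι → ℝ}
    (hle : ∀ i, ∀ x ∈ S, f i x ≤ c i) :
    ∃ y ∈ S, ∀ i, (∃ x ∈ S, f i x < c i) → f i y < c i := by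
  classical
  cases nonempty_fintype ι
  suffices ∀ s : Finset ι, ∃ y ∈ S, ∀ i ∈ s, (∃ x ∈ S, f i x < c i) → f i y < c i by
    simpa using this Finset.univ
  intro s
  induction s using Finset.induction_on with
  | empty => simpa [Set.Nonempty] using hne
  | insert i s _ ih =>
    obtain ⟨y, hyS, hy⟩ := ih
    by_cases hi : ∃ x ∈ S, f i x < c i
    · obtain ⟨x, hxS, hx⟩ := hi
      have hhalf : (0 : ℝ) ≤ 1 / 2 := by norm_num
      have hsum : (1 / 2 : ℝ) + 1 / 2 = 1 := by norm_num
      refine ⟨(1 / 2 : ℝ) • y + (1 / 2 : ℝ) • x, hS hyS hxS hhalf hhalf hsum, ?_⟩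
      intro j hj hjlt
      have hmid := (hf j).2 hyS hxS hhalf hhalf hsum
      simp only [smul_eq_mul] at hmid
      have hyj := hle j y hyS
      have hxj := hle j x hxS
      rcases Finset.mem_insert.mp hj with rfl | hj
      · linarith
      · linarith [hy j hj hjlt]
    · refine ⟨y, hyS, fun j hj hjlt => ?_⟩
      rcases Finset.mem_insert.mp hj with rfl | hj
      · exact absurd hjlt hi
      · exact hy j hj hjlt

end

namespace Matrix

variable {ι κ : Type*} [Fintype κ]

theorem convex_setOf_mulVec_le (A : Matrix ι κ ℝ) (b : ι → ℝ) :
    Convex ℝ {x | ∀ i, (A *ᵥ x) i ≤ b i} :=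
  convex_halfSpace_le A.mulVecLin.isLinear b

theorem exists_pos_forall_mulVec_add_smul_sub_le [Finite ι] (A : Matrix ι κ ℝ) (b : ι → ℝ)
    {x y : κ → ℝ} (hy : ∀ i, (A *ᵥ y) i ≤ b i)
    (hact : ∀ i, (A *ᵥ y) i = b i → (A *ᵥ x) i = b i) :
    ∃ ε > (0 : ℝ), ∀ i, (A *ᵥ (y + ε • (y - x))) i ≤ b i := by
  have hline : ∀ i (ε : ℝ),
      (A *ᵥ (y + ε • (y - x))) i = (A *ᵥ y) i + ε * ((A *ᵥ y) i - (A *ᵥ x) i) := by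
    intro i ε
    simp [mulVec_add, mulVec_smul, mulVec_sub]
  have hev : ∀ᶠ ε in 𝓝 (0 : ℝ), ∀ i, (A *ᵥ (y + ε • (y - x))) i ≤ b i := by
    refine eventually_all.2 fun i => ?_
    simp_rw [hline]
    rcases (hy i).lt_or_eq with hlt | heq
    · have hcont : Continuous fun ε : ℝ => (A *ᵥ y) i + ε * ((A *ᵥ y) i - (A *ᵥ x) i) := by
        fun_prop
      exact ((hcont.tendsto 0).eventually (gt_mem_nhds (by simpa using hlt))).mono fun _ => le_of_lt
    · exact Eventually.of_forall fun ε => by simp [heq, hact i heq]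
  obtain ⟨ε, hmem, hε⟩ := ((hev.filter_mono nhdsWithin_le_nhds).and
    (self_mem_nhdsWithin : ∀ᶠ ε in 𝓝[>] (0 : ℝ), 0 < ε)).exists
  exact ⟨ε, hε, hmem⟩

end Matrix

theorem fiber_inequality_description_general
    (m n d : ℕ) (A : Matrix (Fin m) (Fin n) ℝ) (b : Fin m → ℝ)
    (P : Set (Fin n → ℝ)) (hP : P = {x | ∀ i, A.mulVec x i ≤ b i})
    (W : (Fin n → ℝ) →ₗ[ℝ] (Fin d → ℝ)) (u : Fin d → ℝ)
    (hu : u ∈ (W '' P).extremePoints ℝ)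
    (z : Fin m → ℝ)
    (hz : ∀ i, IsLeast {y | ∃ x ∈ P, W x = u ∧ A.mulVec x i = y} (z i)) :
    {x | W x = u} ∩ P =
      {x | ∀ i, (z i < b i → A.mulVec x i ≤ b i) ∧ (z i = b i → A.mulVec x i = b i)} := by
  subst hP
  set S := {x | W x = u} ∩ {x | ∀ i, (A *ᵥ x) i ≤ b i}
  have hzb : ∀ i, z i ≤ b i := fun i => by
    obtain ⟨x, ⟨hxP, -, hx⟩⟩ := (hz i).1
    exact hx ▸ hxP i
  have hstrict : ∀ i, z i < b i → ∃ x ∈ S, (A *ᵥ x) i < b i := fun i hi => by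
    obtain ⟨x, ⟨hxP, hxu, hx⟩⟩ := (hz i).1
    exact ⟨x, ⟨hxu, hxP⟩, hx ▸ hi⟩
  ext x
  constructor
  · rintro ⟨hxu, hxP⟩ i
    exact ⟨fun _ => hxP i, fun h => le_antisymm (hxP i) (h ▸ (hz i).2 ⟨x, hxP, hxu, rfl⟩)⟩
  · intro hx
    have hxP : ∀ i, (A *ᵥ x) i ≤ b i := fun i =>
      (hzb i).lt_or_eq.elim (hx i).1 fun h => ((hx i).2 h).le
    obtain ⟨p, hpP, hpu⟩ := hu.1
    have hS : Convex ℝ S :=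
      ((convex_singleton u).linear_preimage W).inter (A.convex_setOf_mulVec_le b)
    obtain ⟨y, ⟨hyu : W y = u, hyP⟩, hy⟩ := hS.exists_forall_lt_of_exists_lt ⟨p, hpu, hpP⟩
      (fun i => ((LinearMap.proj i).comp A.mulVecLin).convexOn hS) (fun i x hx => hx.2 i)
    have hact : ∀ i, (A *ᵥ y) i = b i → (A *ᵥ x) i = b i := fun i hyi =>
      (hzb i).lt_or_eq.elim (fun h => absurd hyi (hy i (hstrict i h)).ne) (hx i).2
    obtain ⟨ε, hε, hmem⟩ := A.exists_pos_forall_mulVec_add_smul_sub_le b hyP hact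
    refine ⟨hu.2 ⟨x, hxP, rfl⟩ ⟨_, hmem, rfl⟩ ?_, hxP⟩
    simpa [hyu] using mem_openSegment_add_smul_sub (W x) u hε

/-- Inequality description of the fiber of an extreme point `u` of `W(P)`, where
`P = {x | Ax ≤ b}` is a bounded polyhedron: the fiber is the face of `P` obtained
by turning into equalities exactly those inequalities `A_{i·}x ≤ b_i` whose
minimum `z_i` over the fiber equals `b_i`. -/
theorem fiber_inequality_description
    (m n d : ℕ) (A : Matrix (Fin m) (Fin n) ℝ) (b : Fin m → ℝ)
    (P : Set (Fin n → ℝ)) (hP : P = {x | ∀ i, A.mulVec x i ≤ b i})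
    (hbdd : Bornology.IsBounded P)
    (W : (Fin n → ℝ) →ₗ[ℝ] (Fin d → ℝ)) (u : Fin d → ℝ)
    (hu : u ∈ (W '' P).extremePoints ℝ)
    (z : Fin m → ℝ)
    (hz : ∀ i, IsLeast {y | ∃ x ∈ P, W x = u ∧ A.mulVec x i = y} (z i)) :
    {x | W x = u} ∩ P =
      {x | ∀ i, (z i < b i → A.mulVec x i ≤ b i) ∧ (z i = b i → A.mulVec x i = b i)} :=
  fiber_inequality_description_general m n d A b P hP W u hu z hz
end

section
/- Let F be a nonempty finite subset of ℝ^n, let W : ℝ^n → ℝ^d be a linear map, and let f : ℝ^d → ℝ be quasiconvex. Then max_{x ∈ F} f(Wx) = max { f(u) : u is an extreme point of the polytope W(conv(F)) }; in particular, the maximum of f(Wx) over conv(F) is attained at a point of F whose W-image is an extreme point of W(conv(F)). -/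
/-!
The image `W(conv F) = conv(W F)` is a polytope, so by Krein–Milman it is the convex hull of its
finitely many extreme points, all of which lie in `W F`. A quasiconvex `f` is bounded on a convex
hull by its maximum on the generating points, so its maximum over the polytope is attained at an
extreme point `u = W x` with `x ∈ F`, and there it equals `max_{x ∈ F} f (W x)`.
-/

theorem QuasiconvexOn.le_of_mem_convexHull {𝕜 E β : Type*} [Semiring 𝕜] [PartialOrder 𝕜]
    [AddCommMonoid E] [Module 𝕜 E] [Preorder β] {D s : Set E} {f : E → β} {r : β} {x : E}
    (hf : QuasiconvexOn 𝕜 D f) (hsD : s ⊆ D) (hs : ∀ y ∈ s, f y ≤ r)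
    (hx : x ∈ convexHull 𝕜 s) : f x ≤ r :=
  (convexHull_min (t := {y ∈ D | f y ≤ r}) (fun y hy => ⟨hsD hy, hs y hy⟩) (hf r) hx).2

theorem Set.Finite.extremePoints_convexHull {𝕜 E : Type*} [Ring 𝕜] [LinearOrder 𝕜]
    [IsStrictOrderedRing 𝕜] [DenselyOrdered 𝕜] [AddCommGroup E] [Module 𝕜 E]
    [Module.IsTorsionFree 𝕜 E] {A : Set E} (hA : A.Finite) :
    ((convexHull 𝕜 A).extremePoints 𝕜).Finite :=
  hA.subset extremePoints_convexHull_subset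

section Polytope

variable {E : Type*} [AddCommGroup E] [Module ℝ E] [TopologicalSpace E] [T2Space E]
  [IsTopologicalAddGroup E] [ContinuousSMul ℝ E] [LocallyConvexSpace ℝ E] {A : Set E}

theorem Set.Finite.convexHull_extremePoints_convexHull (hA : A.Finite) :
    convexHull ℝ ((convexHull ℝ A).extremePoints ℝ) = convexHull ℝ A := by
  have hext := hA.extremePoints_convexHull (𝕜 := ℝ)
  simpa only [(hext.isCompact_convexHull ℝ).isClosed.closure_eq] using
    closure_convexHull_extremePoints (hA.isCompact_convexHull ℝ) (convex_convexHull ℝ A)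

theorem QuasiconvexOn.exists_extremePoint_isMaxOn_convexHull {β : Type*} [LinearOrder β]
    {f : E → β} (hA : A.Finite) (hA₀ : A.Nonempty) (hf : QuasiconvexOn ℝ (convexHull ℝ A) f) :
    ∃ u ∈ (convexHull ℝ A).extremePoints ℝ, IsMaxOn f (convexHull ℝ A) u := by
  have hext := hA.extremePoints_convexHull (𝕜 := ℝ)
  have hext₀ : ((convexHull ℝ A).extremePoints ℝ).Nonempty := by
    rw [← convexHull_nonempty_iff (𝕜 := ℝ), hA.convexHull_extremePoints_convexHull]
    exact hA₀.convexHull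
  obtain ⟨u, hu, hmax⟩ := Set.exists_max_image _ f hext hext₀
  refine ⟨u, hu, fun z hz => ?_⟩
  rw [← hA.convexHull_extremePoints_convexHull] at hz
  exact hf.le_of_mem_convexHull extremePoints_subset hmax hz

end Polytope

/-- Quasiconvex combinatorial maximization: for a quasiconvex `f` and a linear map `W`,
the maximum of `f(Wx)` over a nonempty finite set `F` equals the maximum of `f` over the
extreme points of the polytope `W(conv F)`; in particular the maximum of `f ∘ W` over
`conv F` is attained at a point of `F` whose `W`-image is an extreme point of `W(conv F)`. -/
theorem quasiconvex_max_at_extreme_point_of_image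
    (n d : ℕ) (F : Finset (Fin n → ℝ)) (hF : F.Nonempty)
    (W : (Fin n → ℝ) →ₗ[ℝ] (Fin d → ℝ))
    (f : (Fin d → ℝ) → ℝ)
    (hf : ∀ t : ℝ, Convex ℝ {z : Fin d → ℝ | f z ≤ t}) :
    IsGreatest (f '' ((W '' (convexHull ℝ (F : Set (Fin n → ℝ)))).extremePoints ℝ))
        (F.sup' hF fun x => f (W x)) ∧
      ∃ x ∈ F, W x ∈ (W '' (convexHull ℝ (F : Set (Fin n → ℝ)))).extremePoints ℝ ∧
        ∀ y ∈ convexHull ℝ (F : Set (Fin n → ℝ)), f (W y) ≤ f (W x) := by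
  rw [W.image_convexHull]
  have hfq : QuasiconvexOn ℝ (convexHull ℝ (W '' F)) f :=
    (convex_convexHull ℝ _).quasiconvexOn_of_convex_le hf
  obtain ⟨u, hu, humax⟩ :=
    hfq.exists_extremePoint_isMaxOn_convexHull (F.finite_toSet.image W) (hF.to_set.image W)
  obtain ⟨x, hxF, rfl⟩ := extremePoints_convexHull_subset hu
  have hmem : ∀ y ∈ convexHull ℝ (F : Set (Fin n → ℝ)), W y ∈ convexHull ℝ (W '' F) :=
    fun y hy => W.image_convexHull (F : Set _) ▸ Set.mem_image_of_mem W hy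
  have hsup : (F.sup' hF fun x => f (W x)) = f (W x) :=
    le_antisymm (F.sup'_le hF _ fun y hy => humax (hmem y (subset_convexHull ℝ _ hy)))
      (F.le_sup' (fun x => f (W x)) hxF)
  refine ⟨⟨⟨W x, hu, hsup.symm⟩, ?_⟩, x, hxF, hu, fun y hy => humax (hmem y hy)⟩
  rintro _ ⟨v, hv, rfl⟩
  exact hsup ▸ humax hv.1
end

section
/- Let W ∈ ℝ^{d×n} be a matrix with nonnegative entries, let F be a nonempty finite subset of ℝ^n_+, and let f be a norm on ℝ^d. Suppose C_f, C^f > 0 satisfy C_f‖u‖_∞ ≤ f(u) ≤ C^f‖u‖_∞ for all u ∈ ℝ^d. For each i = 1,…,d, let x^i ∈ F attain max { W_{i·}x : x ∈ F }, and let r ∈ {1,…,d} satisfy f(Wx^r) = max_{1 ≤ i ≤ d} f(Wx^i). Then max_{x ∈ F} f(Wx) ≤ (C^f / C_f) · f(Wx^r); that is, x^r is a (C^f/C_f)-approximate maximizer of f(Wx) over F. -/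
/-- Approximate norm maximization (Theorem 2 of the paper): for a nonnegative matrix `W`,
a nonempty finite set `F` of nonnegative vectors, and a norm `f` on `ℝ^d` with
`C_f‖u‖_∞ ≤ f(u) ≤ C^f‖u‖_∞`, the point `x^r` achieving the best value of `f(Wx^i)`
among the row maximizers `x^i` is a `(C^f/C_f)`-approximate maximizer of `f(Wx)` over `F`.
Here `‖·‖` on `Fin d → ℝ` is the sup-norm. -/
theorem norm_maximization_approximation
    (d n : ℕ)
    (W : Matrix (Fin d) (Fin n) ℝ) (hW : ∀ i j, 0 ≤ W i j)
    (F : Finset (Fin n → ℝ)) (hFne : F.Nonempty)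
    (hFpos : ∀ x ∈ F, ∀ j, 0 ≤ x j)
    (f : (Fin d → ℝ) → ℝ)
    (hf_add : ∀ u v : Fin d → ℝ, f (u + v) ≤ f u + f v)
    (hf_smul : ∀ (c : ℝ) (u : Fin d → ℝ), f (c • u) = |c| * f u)
    (hf_def : ∀ u : Fin d → ℝ, f u = 0 → u = 0)
    (Cf CF : ℝ) (hCf : 0 < Cf) (hCF : 0 < CF)
    (hlow : ∀ u : Fin d → ℝ, Cf * ‖u‖ ≤ f u)
    (hup : ∀ u : Fin d → ℝ, f u ≤ CF * ‖u‖)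
    (xi : Fin d → (Fin n → ℝ)) (hxiF : ∀ i, xi i ∈ F)
    (hxiopt : ∀ i, ∀ x ∈ F, W.mulVec x i ≤ W.mulVec (xi i) i)
    (r : Fin d) (hr : ∀ i, f (W.mulVec (xi i)) ≤ f (W.mulVec (xi r))) :
    ∀ x ∈ F, f (W.mulVec x) ≤ (CF / Cf) * f (W.mulVec (xi r)) := by
  intro x hx
  have hfr_nonneg : 0 ≤ f (W.mulVec (xi r)) :=
    le_trans (by positivity) (hlow _)
  have key : ‖W.mulVec x‖ ≤ f (W.mulVec (xi r)) / Cf := by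
    refine pi_norm_le_iff_of_nonneg (by positivity) |>.2 fun i => ?_
    have h1 : 0 ≤ W.mulVec x i := by
      simp only [Matrix.mulVec, dotProduct]
      exact Finset.sum_nonneg fun j _ => mul_nonneg (hW i j) (hFpos x hx j)
    rw [Real.norm_eq_abs, abs_of_nonneg h1]
    have h2 : W.mulVec x i ≤ W.mulVec (xi i) i := hxiopt i x hx
    have h3 : W.mulVec (xi i) i ≤ ‖W.mulVec (xi i)‖ := by
      calc W.mulVec (xi i) i ≤ ‖W.mulVec (xi i) i‖ := le_abs_self _
        _ ≤ ‖W.mulVec (xi i)‖ := norm_le_pi_norm _ i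
    have h4 : ‖W.mulVec (xi i)‖ ≤ f (W.mulVec (xi i)) / Cf := by
      rw [le_div_iff₀ hCf, mul_comm]; exact hlow _
    have h5 : f (W.mulVec (xi i)) / Cf ≤ f (W.mulVec (xi r)) / Cf := by
      gcongr
      exact hr i
    linarith
  calc f (W.mulVec x) ≤ CF * ‖W.mulVec x‖ := hup _
    _ ≤ CF * (f (W.mulVec (xi r)) / Cf) := by
        exact mul_le_mul_of_nonneg_left key hCF.le
    _ = (CF / Cf) * f (W.mulVec (xi r)) := by ring
end

section
/- Let W ∈ ℝ^{d×n} be a matrix with nonnegative entries, let F be a nonempty finite subset of ℝ^n_+, and let 1 ≤ p ≤ ∞. For each i = 1,…,d, let x^i ∈ F attain max { W_{i·}x : x ∈ F }, and let r ∈ {1,…,d} satisfy ‖Wx^r‖_p = max_{1 ≤ i ≤ d} ‖Wx^i‖_p. Then max_{x ∈ F} ‖Wx‖_p ≤ d^{1/p} · ‖Wx^r‖_p (where d^{1/∞} is interpreted as 1); that is, x^r is a d^{1/p}-approximate maximizer of ‖Wx‖_p over F. -/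
open scoped ENNReal

/-! Each coordinate `(W x)_i` is nonnegative and at most `(W x^i)_i ≤ ‖W x^i‖_∞ ≤ ‖W x^i‖_p ≤ ‖W x^r‖_p`,
so `‖W x‖_∞ ≤ ‖W x^r‖_p`; the comparison `‖·‖_p ≤ d^{1/p} ‖·‖_∞` then gives the bound. -/

open Matrix

namespace PiLp

variable {ι : Type*} [Fintype ι] (p : ℝ≥0∞) [Fact (1 ≤ p)] {β : ι → Type*}
  [∀ i, SeminormedAddCommGroup (β i)]

lemma norm_le_norm_toLp (f : ∀ i, β i) : ‖f‖ ≤ ‖WithLp.toLp p f‖ := by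
  simpa using (lipschitzWith_ofLp p β).dist_le_mul (WithLp.toLp p f) 0

lemma norm_toLp_le_card_rpow_mul_norm (f : ∀ i, β i) :
    ‖WithLp.toLp p f‖ ≤ (Fintype.card ι : ℝ) ^ (1 / p).toReal * ‖f‖ := by
  simpa using (lipschitzWith_toLp p β).dist_le_mul f 0

end PiLp

lemma Matrix.mulVec_apply_nonneg {m n R : Type*} [Fintype n] [Semiring R] [PartialOrder R]
    [IsOrderedRing R] {W : Matrix m n R} (hW : ∀ i j, 0 ≤ W i j) {x : n → R}
    (hx : ∀ j, 0 ≤ x j) (i : m) : 0 ≤ (W *ᵥ x) i :=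
  dotProduct_nonneg_of_nonneg (hW i) hx

theorem pnorm_maximization_approximation_general
    (d n : ℕ) (p : ℝ≥0∞) [Fact (1 ≤ p)]
    (W : Matrix (Fin d) (Fin n) ℝ) (hW : ∀ i j, 0 ≤ W i j)
    (F : Finset (Fin n → ℝ))
    (hFpos : ∀ x ∈ F, ∀ j, 0 ≤ x j)
    (xi : Fin d → (Fin n → ℝ))
    (hxiopt : ∀ i, ∀ x ∈ F, W.mulVec x i ≤ W.mulVec (xi i) i)
    (r : Fin d)
    (hr : ∀ i, ‖(WithLp.equiv p (Fin d → ℝ)).symm (W.mulVec (xi i))‖ ≤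
               ‖(WithLp.equiv p (Fin d → ℝ)).symm (W.mulVec (xi r))‖) :
    ∀ x ∈ F,
      ‖(WithLp.equiv p (Fin d → ℝ)).symm (W.mulVec x)‖ ≤
        (d : ℝ) ^ (1 / p).toReal *
          ‖(WithLp.equiv p (Fin d → ℝ)).symm (W.mulVec (xi r))‖ := by
  intro x hx
  simp only [WithLp.equiv_symm_apply] at hr ⊢
  have hcoord (i : Fin d) : ‖(W *ᵥ x) i‖ ≤ ‖WithLp.toLp p (W *ᵥ xi r)‖ :=
    calc ‖(W *ᵥ x) i‖ = (W *ᵥ x) i :=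
          Real.norm_of_nonneg (Matrix.mulVec_apply_nonneg hW (hFpos x hx) i)
      _ ≤ (W *ᵥ xi i) i := hxiopt i x hx
      _ ≤ ‖W *ᵥ xi i‖ := Real.le_norm_self _ |>.trans (norm_le_pi_norm _ i)
      _ ≤ ‖WithLp.toLp p (W *ᵥ xi i)‖ := PiLp.norm_le_norm_toLp p _
      _ ≤ _ := hr i
  calc ‖WithLp.toLp p (W *ᵥ x)‖ ≤ (d : ℝ) ^ (1 / p).toReal * ‖W *ᵥ x‖ := by
        simpa using PiLp.norm_toLp_le_card_rpow_mul_norm p (W *ᵥ x)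
    _ ≤ _ := by
        gcongr
        exact (pi_norm_le_iff_of_nonneg (norm_nonneg _)).2 hcoord

/-- `d^{1/p}`-approximate `p`-norm maximization: for a nonnegative matrix `W`, a nonempty
finite set `F` of nonnegative vectors, and `1 ≤ p ≤ ∞`, the point `x^r` achieving the best
`p`-norm `‖Wx^i‖_p` among the row maximizers `x^i` satisfies
`‖Wx‖_p ≤ d^{1/p} ‖Wx^r‖_p` for all `x ∈ F` (with `d^{1/∞} = 1`). -/
theorem pnorm_maximization_approximation
    (d n : ℕ) (p : ℝ≥0∞) [Fact (1 ≤ p)]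
    (W : Matrix (Fin d) (Fin n) ℝ) (hW : ∀ i j, 0 ≤ W i j)
    (F : Finset (Fin n → ℝ)) (hFne : F.Nonempty)
    (hFpos : ∀ x ∈ F, ∀ j, 0 ≤ x j)
    (xi : Fin d → (Fin n → ℝ)) (hxiF : ∀ i, xi i ∈ F)
    (hxiopt : ∀ i, ∀ x ∈ F, W.mulVec x i ≤ W.mulVec (xi i) i)
    (r : Fin d)
    (hr : ∀ i, ‖(WithLp.equiv p (Fin d → ℝ)).symm (W.mulVec (xi i))‖ ≤
               ‖(WithLp.equiv p (Fin d → ℝ)).symm (W.mulVec (xi r))‖) :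
    ∀ x ∈ F,
      ‖(WithLp.equiv p (Fin d → ℝ)).symm (W.mulVec x)‖ ≤
        (d : ℝ) ^ (1 / p).toReal *
          ‖(WithLp.equiv p (Fin d → ℝ)).symm (W.mulVec (xi r))‖ :=
  pnorm_maximization_approximation_general d n p W hW F hFpos xi hxiopt r hr
end

section
/- Let f : ℝ^d_+ → ℝ be ray-concave and non-decreasing. Let u^1, …, u^r ∈ ℝ^d_+ and let λ_1, …, λ_r ≥ 0 with Σ_{i=1}^r λ_i = 1. Then min_{1 ≤ i ≤ r} f(u^i) ≤ r · f( Σ_{i=1}^r λ_i u^i ). -/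
/-- Key inequality for approximate ray-concave minimization: if `f` is ray-concave and
non-decreasing on the nonnegative orthant, `u^1, …, u^r` are nonnegative vectors and
`λ₁, …, λ_r ≥ 0` sum to `1`, then `minᵢ f(uⁱ) ≤ r · f(∑ᵢ λᵢ uⁱ)`. -/
theorem min_le_card_mul_f_convex_combination
    (d r : ℕ) (hr : 0 < r) (f : (Fin d → ℝ) → ℝ)
    (hray : ∀ u : Fin d → ℝ, (∀ i, 0 ≤ u i) →
      ∀ lam : ℝ, 0 ≤ lam → lam ≤ 1 → lam * f u ≤ f (lam • u))
    (hmono : ∀ u v : Fin d → ℝ, (∀ i, 0 ≤ u i) → (∀ i, 0 ≤ v i) →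
      (∀ i, u i ≤ v i) → f u ≤ f v)
    (u : Fin r → (Fin d → ℝ)) (hu : ∀ i, ∀ k, 0 ≤ u i k)
    (lam : Fin r → ℝ) (hlam : ∀ i, 0 ≤ lam i) (hsum : ∑ i, lam i = 1) :
    (Finset.univ : Finset (Fin r)).inf' ⟨⟨0, hr⟩, Finset.mem_univ _⟩ (fun i => f (u i)) ≤
      (r : ℝ) * f (∑ i, lam i • u i) := by
  -- pick index t maximizing lam
  obtain ⟨t, -, ht⟩ := Finset.exists_max_image (Finset.univ : Finset (Fin r)) lam
    ⟨⟨0, hr⟩, Finset.mem_univ _⟩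
  have hlamt1 : lam t ≤ 1 := by
    rw [← hsum]
    exact Finset.single_le_sum (fun i _ => hlam i) (Finset.mem_univ t)
  have hrlam : 1 ≤ (r : ℝ) * lam t := by
    have : (1 : ℝ) = ∑ i, lam i := hsum.symm
    rw [this]
    calc ∑ i, lam i ≤ ∑ _i : Fin r, lam t :=
          Finset.sum_le_sum (fun i _ => ht i (Finset.mem_univ i))
      _ = (r : ℝ) * lam t := by simp [Finset.sum_const, mul_comm]
  -- f is nonnegative on the orthant
  have hf0 : 0 ≤ f ((0 : ℝ) • u t) := by
    have := hray (u t) (hu t) 0 le_rfl zero_le_one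
    simpa using this
  have hfut : 0 ≤ f (u t) := by
    refine le_trans hf0 (hmono _ _ (fun i => by simp) (hu t) (fun i => by simpa using hu t i))
  -- chain of inequalities
  have h1 : f (u t) ≤ (r : ℝ) * lam t * f (u t) := le_mul_of_one_le_left hfut hrlam
  have h2 : (r : ℝ) * lam t * f (u t) ≤ (r : ℝ) * f (lam t • u t) := by
    rw [mul_assoc]
    exact mul_le_mul_of_nonneg_left (hray (u t) (hu t) (lam t) (hlam t) hlamt1)
      (by positivity)
  have h3 : f (lam t • u t) ≤ f (∑ i, lam i • u i) := by
    refine hmono _ _ (fun k => by simpa using mul_nonneg (hlam t) (hu t k))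
      (fun k => by
        rw [Finset.sum_apply]
        exact Finset.sum_nonneg fun i _ => by
          simpa using mul_nonneg (hlam i) (hu i k))
      (fun k => by
        rw [Finset.sum_apply]
        have : lam t * u t k ≤ ∑ i, lam i * u i k :=
          Finset.single_le_sum (fun i _ => mul_nonneg (hlam i) (hu i k))
            (Finset.mem_univ t)
        simpa using this)
  calc (Finset.univ : Finset (Fin r)).inf' ⟨⟨0, hr⟩, Finset.mem_univ _⟩ (fun i => f (u i))
      ≤ f (u t) := Finset.inf'_le _ (Finset.mem_univ t)
    _ ≤ (r : ℝ) * lam t * f (u t) := h1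
    _ ≤ (r : ℝ) * f (lam t • u t) := h2
    _ ≤ (r : ℝ) * f (∑ i, lam i • u i) :=
        mul_le_mul_of_nonneg_left h3 (by positivity)
end

section
/- Let W ∈ ℝ^{d×n} be a matrix with nonnegative entries and let F be a nonempty finite subset of ℝ^n_+. Let 1 ≤ p ≤ ∞ and let q satisfy 1/p + 1/q = 1 (with the obvious interpretations when a denominator is ∞). Let û be an extreme point of the polytope W(conv(F)) attaining the minimum of the p-norm ‖·‖_p over the extreme points of W(conv(F)), and let x̂ ∈ F satisfy Wx̂ = û. Then ‖Wx̂‖_p ≤ d^{1/q} · min_{x ∈ F} ‖Wx‖_p. In particular, for p = 1 one gets an exact minimizer (factor 1). -/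
/-!
The sum of coordinates `ℓ u = ∑ i, u i` is a linear functional, so its minimum over the compact
set `W(conv F)` is attained at an extreme point `e` (an extreme point of the exposed face of
minimizers). On the nonnegative orthant `ℓ` is the `1`-norm, so for every `x ∈ F`
`‖û‖_p ≤ ‖e‖_p ≤ ‖e‖_1 ≤ ‖Wx‖_1 ≤ d^{1/q} ‖Wx‖_p`, the last step being Hölder's inequality.
-/

open scoped ENNReal

namespace PiLp

variable {ι : Type*} [Fintype ι] {E : Type*} [SeminormedAddCommGroup E]

theorem norm_toLp_le_sum_norm (p : ℝ≥0∞) [Fact (1 ≤ p)] (v : ι → E) :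
    ‖WithLp.toLp p v‖ ≤ ∑ i, ‖v i‖ := by
  classical
  calc ‖WithLp.toLp p v‖ = ‖∑ i, WithLp.toLp p (Pi.single i (v i) : ι → E)‖ := by
        rw [← WithLp.toLp_sum, Finset.univ_sum_single]
    _ ≤ ∑ i, ‖WithLp.toLp p (Pi.single i (v i) : ι → E)‖ := norm_sum_le _ _
    _ = ∑ i, ‖v i‖ := Finset.sum_congr rfl fun i _ => PiLp.norm_single p (fun _ => E) i (v i)

theorem sum_norm_le_card_rpow_mul_norm_toLp {p q : ℝ≥0∞} [Fact (1 ≤ p)] (hpq : p⁻¹ + q⁻¹ = 1)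
    (v : ι → E) :
    ∑ i, ‖v i‖ ≤ (Fintype.card ι : ℝ) ^ q⁻¹.toReal * ‖WithLp.toLp p v‖ := by
  rcases eq_or_ne p ∞ with rfl | hp
  · have hq : q⁻¹ = 1 := by simpa using hpq
    rw [hq, ENNReal.toReal_one, Real.rpow_one]
    calc ∑ i, ‖v i‖ ≤ ∑ _i : ι, ‖WithLp.toLp ∞ v‖ :=
          Finset.sum_le_sum fun i _ => PiLp.norm_apply_le (WithLp.toLp ∞ v) i
      _ = _ := by simp
  · have hp1 : 1 ≤ p.toReal := by simpa using ENNReal.toReal_mono hp (Fact.out : 1 ≤ p)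
    have hq : q⁻¹.toReal = 1 - p.toReal⁻¹ := by
      have hq_ne_top : q⁻¹ ≠ ∞ := ne_top_of_le_ne_top ENNReal.one_ne_top (hpq ▸ le_add_self)
      have hp_ne_top : p⁻¹ ≠ ∞ := ENNReal.inv_ne_top.2 (zero_lt_one.trans_le Fact.out).ne'
      rw [← ENNReal.toReal_inv, ← ENNReal.toReal_one, ← hpq, ENNReal.toReal_add hp_ne_top hq_ne_top]
      ring
    have := Real.inner_le_weight_mul_Lp_of_nonneg Finset.univ hp1 (fun _ => 1) (fun i => ‖v i‖)
      (fun _ => zero_le_one) (fun i => norm_nonneg _)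
    simp only [one_mul, Finset.sum_const, Finset.card_univ, nsmul_eq_mul, mul_one] at this
    rw [hq, PiLp.norm_eq_sum (by linarith)]
    simpa [one_div] using this

end PiLp

theorem IsCompact.exists_mem_extremePoints_isMinOn {E : Type*} [AddCommGroup E] [Module ℝ E]
    [TopologicalSpace E] [T2Space E] [IsTopologicalAddGroup E] [ContinuousSMul ℝ E]
    [LocallyConvexSpace ℝ E] {s : Set E} (hs : IsCompact s) (hne : s.Nonempty)
    (l : StrongDual ℝ E) : ∃ e ∈ s.extremePoints ℝ, IsMinOn l s e := by
  have hface : IsExposed ℝ s ((-l).toExposed s) := ContinuousLinearMap.toExposed.isExposed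
  obtain ⟨x, hxs, hx⟩ := hs.exists_isMinOn hne l.continuous.continuousOn
  obtain ⟨e, he⟩ := (hface.isCompact hs).extremePoints_nonempty
    ⟨x, hxs, fun y hy => neg_le_neg (hx hy)⟩
  exact ⟨e, hface.isExtreme.extremePoints_subset_extremePoints he,
    fun y hy => neg_le_neg_iff.1 (he.1.2 y hy)⟩

theorem Matrix.mulVec_nonneg {m n R : Type*} [Fintype n] [CommSemiring R] [PartialOrder R]
    [IsOrderedRing R] {W : Matrix m n R} (hW : ∀ i j, 0 ≤ W i j) {x : n → R} (hx : 0 ≤ x) :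
    0 ≤ W.mulVec x :=
  fun i => dotProduct_nonneg_of_nonneg (hW i) hx

theorem pnorm_minimization_approximation_general
    (d n : ℕ) (p q : ℝ≥0∞) [Fact (1 ≤ p)] (hpq : 1 / p + 1 / q = 1)
    (W : Matrix (Fin d) (Fin n) ℝ) (hW : ∀ i j, 0 ≤ W i j)
    (F : Finset (Fin n → ℝ))
    (hFpos : ∀ x ∈ F, ∀ j, 0 ≤ x j)
    (uhat : Fin d → ℝ)
    (huext : uhat ∈
      (W.mulVecLin '' (convexHull ℝ (F : Set (Fin n → ℝ)))).extremePoints ℝ)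
    (humin : ∀ u ∈
      (W.mulVecLin '' (convexHull ℝ (F : Set (Fin n → ℝ)))).extremePoints ℝ,
      ‖(WithLp.equiv p (Fin d → ℝ)).symm uhat‖ ≤ ‖(WithLp.equiv p (Fin d → ℝ)).symm u‖)
    (xhat : Fin n → ℝ) (hxhat : W.mulVec xhat = uhat) :
    (∀ x ∈ F,
      ‖(WithLp.equiv p (Fin d → ℝ)).symm (W.mulVec xhat)‖ ≤
        (d : ℝ) ^ (1 / q).toReal *
          ‖(WithLp.equiv p (Fin d → ℝ)).symm (W.mulVec x)‖) ∧
    (p = 1 → ∀ x ∈ F,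
      ‖(WithLp.equiv p (Fin d → ℝ)).symm (W.mulVec xhat)‖ ≤
        ‖(WithLp.equiv p (Fin d → ℝ)).symm (W.mulVec x)‖) := by
  simp only [WithLp.equiv_symm_apply, one_div] at hpq humin ⊢
  set S := W.mulVecLin '' convexHull ℝ (F : Set (Fin n → ℝ))
  have hS : IsCompact S :=
    (F.finite_toSet.isCompact_convexHull ℝ).image W.mulVecLin.continuous_of_finiteDimensional
  have hS_nonneg : ∀ u ∈ S, 0 ≤ u := by
    rintro _ ⟨y, hy, rfl⟩
    exact Matrix.mulVec_nonneg hW (convexHull_min hFpos (convex_Ici 0) hy)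
  have sum_eq_sum_norm : ∀ u ∈ S, ∑ i, u i = ∑ i, ‖u i‖ := fun u hu =>
    Finset.sum_congr rfl fun i _ => (Real.norm_of_nonneg (hS_nonneg u hu i)).symm
  obtain ⟨e, he, he_min⟩ :=
    hS.exists_mem_extremePoints_isMinOn ⟨uhat, huext.1⟩ (∑ i, ContinuousLinearMap.proj i)
  have main : ∀ x ∈ F, ‖WithLp.toLp p (W.mulVec xhat)‖ ≤
      (d : ℝ) ^ q⁻¹.toReal * ‖WithLp.toLp p (W.mulVec x)‖ := by
    intro x hx
    have hWx : W.mulVec x ∈ S := ⟨x, subset_convexHull ℝ _ hx, rfl⟩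
    calc ‖WithLp.toLp p (W.mulVec xhat)‖ ≤ ‖WithLp.toLp p e‖ := hxhat ▸ humin e he
      _ ≤ ∑ i, ‖e i‖ := PiLp.norm_toLp_le_sum_norm p e
      _ = ∑ i, e i := (sum_eq_sum_norm e he.1).symm
      _ ≤ ∑ i, (W.mulVec x) i := by simpa using he_min hWx
      _ = ∑ i, ‖(W.mulVec x) i‖ := sum_eq_sum_norm _ hWx
      _ ≤ _ := by
        simpa using PiLp.sum_norm_le_card_rpow_mul_norm_toLp hpq (W.mulVec x)
  refine ⟨main, fun hp x hx => ?_⟩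
  have hq : q⁻¹ = 0 := by simpa [hp] using hpq
  simpa [hq] using main x hx

/-- `p`-norm refinement of approximate minimization (Theorem 3 of the paper): with
`1/p + 1/q = 1`, if `û` minimizes the `p`-norm over the extreme points of `W(conv F)`
and `x̂ ∈ F` satisfies `Wx̂ = û`, then `‖Wx̂‖_p ≤ d^{1/q} · ‖Wx‖_p` for every `x ∈ F`;
in particular, for `p = 1` the point `x̂` is an exact minimizer. -/
theorem pnorm_minimization_approximation
    (d n : ℕ) (p q : ℝ≥0∞) [Fact (1 ≤ p)] (hpq : 1 / p + 1 / q = 1)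
    (W : Matrix (Fin d) (Fin n) ℝ) (hW : ∀ i j, 0 ≤ W i j)
    (F : Finset (Fin n → ℝ)) (hFne : F.Nonempty)
    (hFpos : ∀ x ∈ F, ∀ j, 0 ≤ x j)
    (uhat : Fin d → ℝ)
    (huext : uhat ∈
      (W.mulVecLin '' (convexHull ℝ (F : Set (Fin n → ℝ)))).extremePoints ℝ)
    (humin : ∀ u ∈
      (W.mulVecLin '' (convexHull ℝ (F : Set (Fin n → ℝ)))).extremePoints ℝ,
      ‖(WithLp.equiv p (Fin d → ℝ)).symm uhat‖ ≤ ‖(WithLp.equiv p (Fin d → ℝ)).symm u‖)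
    (xhat : Fin n → ℝ) (hxhatF : xhat ∈ F) (hxhat : W.mulVec xhat = uhat) :
    (∀ x ∈ F,
      ‖(WithLp.equiv p (Fin d → ℝ)).symm (W.mulVec xhat)‖ ≤
        (d : ℝ) ^ (1 / q).toReal *
          ‖(WithLp.equiv p (Fin d → ℝ)).symm (W.mulVec x)‖) ∧
    (p = 1 → ∀ x ∈ F,
      ‖(WithLp.equiv p (Fin d → ℝ)).symm (W.mulVec xhat)‖ ≤
        ‖(WithLp.equiv p (Fin d → ℝ)).symm (W.mulVec x)‖) :=
  pnorm_minimization_approximation_general d n p q hpq W hW F hFpos uhat huext humin xhat hxhat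
end

section
/- Let K be a field of characteristic zero (e.g., ℚ), let M₁, M₂ be r×n matrices over K, let W ∈ ℕ^{d×n}, let u ∈ ℕ^d, and let s be a positive integer. Define g_u(a) := Σ { det(M₁^S)·det(M₂^S)·Π_{j∈S} a_j : S ⊆ {1,…,n}, |S| = r, W·χ_S = u }. Suppose there exists S₀ ⊆ {1,…,n} with |S₀| = r, det(M₁^{S₀})·det(M₂^{S₀}) ≠ 0, and W·χ_{S₀} = u. Then the number of points a ∈ {1, 2, …, s}^n with g_u(a) = 0 is at most (r/s)·s^n; equivalently, if a_1, …, a_n are independent uniformly distributed random variables on {1, …, s}, then the probability that g_u(a) = 0 is at most r/s. -/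
open MvPolynomial

/-- The polynomial `g_u(a) = ∑ {det(M₁^S) det(M₂^S) ∏_{j∈S} a_j : |S| = r, Wχ_S = u}`
over a field `K`. -/
noncomputable def gPoly {K : Type*} [Field K] (r n d : ℕ)
    (M₁ M₂ : Matrix (Fin r) (Fin n) K) (W : Matrix (Fin d) (Fin n) ℕ)
    (u : Fin d → ℕ) : MvPolynomial (Fin n) K :=
  ∑ S ∈ (Finset.powersetCard r (Finset.univ : Finset (Fin n))).attach,
    if ∀ i, (∑ j ∈ S.1, W i j) = u i then
      MvPolynomial.C
        ((M₁.submatrix id fun k =>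
            ((S.1.orderIsoOfFin (Finset.mem_powersetCard.mp S.2).2) k : Fin n)).det *
         (M₂.submatrix id fun k =>
            ((S.1.orderIsoOfFin (Finset.mem_powersetCard.mp S.2).2) k : Fin n)).det) *
        ∏ j ∈ S.1, MvPolynomial.X j
    else 0


open Finset

private lemma sum_piFinset_succ {β M : Type*} [DecidableEq β] [AddCommMonoid M] {n : ℕ}
    (T : Finset β) (f : (Fin (n + 1) → β) → M) :
    ∑ a ∈ Fintype.piFinset (fun _ : Fin (n + 1) => T), f a
      = ∑ a' ∈ Fintype.piFinset (fun _ : Fin n => T), ∑ x ∈ T, f (Fin.cons x a') := by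
  rw [← Finset.sum_product']
  refine Finset.sum_bij' (fun a _ => (Fin.tail a, a 0)) (fun p _ => Fin.cons p.2 p.1)
    ?_ ?_ ?_ ?_ ?_
  · intro a ha
    rw [Fintype.mem_piFinset] at ha
    exact Finset.mem_product.mpr ⟨Fintype.mem_piFinset.mpr fun i => ha i.succ, ha 0⟩
  · intro p hp
    rw [Finset.mem_product] at hp
    refine Fintype.mem_piFinset.mpr fun i => ?_
    refine Fin.cases ?_ (fun j => ?_) i
    · simpa using hp.2
    · simpa using Fintype.mem_piFinset.mp hp.1 j
  · intro a _
    exact Fin.cons_self_tail a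
  · intro p _
    simp [Fin.tail_cons]
  · intro a _
    rw [Fin.cons_self_tail]

private lemma schwartz_zippel {K : Type*} [Field K] [CharZero K] [DecidableEq K] :
    ∀ (n : ℕ) (p : MvPolynomial (Fin n) K), p ≠ 0 → ∀ T : Finset ℕ,
    ((Fintype.piFinset fun _ : Fin n => T).filter
        fun a => MvPolynomial.eval (fun j => ((a j : ℕ) : K)) p = 0).card * T.card
      ≤ p.totalDegree * T.card ^ n := by
  intro n
  induction n with
  | zero =>
    intro p hp T
    obtain ⟨c, rfl⟩ := C_surjective (Fin 0) p
    have hc : c ≠ 0 := fun h => hp (by simp [h])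
    have he : ((Fintype.piFinset fun _ : Fin 0 => T).filter
        fun a => MvPolynomial.eval (fun j => ((a j : ℕ) : K)) (C c) = 0) = ∅ :=
      Finset.filter_eq_empty_iff.mpr (fun _ => by simp [hc])
    rw [he]
    simp
  | succ n ih =>
    intro p hp T
    set s := T.card with hsdef
    set q := finSuccEquiv K n p with hqdef
    have hq : q ≠ 0 := by
      intro h
      exact hp ((map_eq_zero_iff _ (finSuccEquiv K n).injective).mp h)
    set k := q.natDegree with hkdef
    have hlc : q.coeff k ≠ 0 := by
      rw [hkdef, ← Polynomial.leadingCoeff]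
      exact Polynomial.leadingCoeff_ne_zero.mpr hq
    set F := Fintype.piFinset (fun _ : Fin n => T) with hFdef
    have hFcard : F.card = s ^ n := by
      rw [hFdef, Fintype.card_piFinset, Finset.prod_const, Finset.card_univ, Fintype.card_fin]
    -- counting decomposition
    have hcount : ((Fintype.piFinset fun _ : Fin (n + 1) => T).filter
        fun a => MvPolynomial.eval (fun j => ((a j : ℕ) : K)) p = 0).card
        = ∑ a' ∈ F, (T.filter fun x =>
            MvPolynomial.eval (fun j => (((Fin.cons x a' : Fin (n+1) → ℕ) j : ℕ) : K)) p = 0).card := by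
      rw [Finset.card_filter, sum_piFinset_succ]
      refine Finset.sum_congr rfl fun a' _ => ?_
      rw [Finset.card_filter]
    -- rewrite the evaluation
    have heval : ∀ (x : ℕ) (a' : Fin n → ℕ),
        MvPolynomial.eval (fun j => (((Fin.cons x a' : Fin (n+1) → ℕ) j : ℕ) : K)) p
          = Polynomial.eval ((x : ℕ) : K)
              (Polynomial.map (MvPolynomial.eval fun j => ((a' j : ℕ) : K)) q) := by
      intro x a'
      have hfe : (fun j => (((Fin.cons x a' : Fin (n+1) → ℕ) j : ℕ) : K))
          = Fin.cons ((x : ℕ) : K) (fun j => ((a' j : ℕ) : K)) := by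
        funext j
        refine Fin.cases ?_ (fun i => ?_) j <;> simp
      rw [hfe, eval_eq_eval_mv_eval']
    -- pointwise bound
    have hpoint : ∀ a' ∈ F, (T.filter fun x =>
            MvPolynomial.eval (fun j => (((Fin.cons x a' : Fin (n+1) → ℕ) j : ℕ) : K)) p = 0).card
          ≤ if MvPolynomial.eval (fun j => ((a' j : ℕ) : K)) (q.coeff k) = 0 then s else k := by
      intro a' _
      split_ifs with hzero
      · exact le_trans (Finset.card_filter_le _ _) le_rfl
      · set q' := Polynomial.map (MvPolynomial.eval fun j => ((a' j : ℕ) : K)) q with hq'def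
        have hq'c : q'.coeff k ≠ 0 := by
          rw [hq'def, Polynomial.coeff_map]; exact hzero
        have hq'0 : q' ≠ 0 := fun h => hq'c (by simp [h])
        have hdeg : q'.natDegree ≤ k := Polynomial.natDegree_map_le
        set Z := (T.filter fun x => Polynomial.eval ((x : ℕ) : K) q' = 0).image
          (fun x : ℕ => (x : K)) with hZdef
        have hZcard : Z.card = (T.filter fun x => Polynomial.eval ((x : ℕ) : K) q' = 0).card :=
          Finset.card_image_of_injective _ Nat.cast_injective
        have hZroots : Z.val ⊆ q'.roots := by
          intro z hz
          rw [hZdef] at hz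
          simp only [Finset.mem_val, Finset.mem_image, Finset.mem_filter] at hz
          obtain ⟨x, ⟨_, hx⟩, rfl⟩ := hz
          exact Polynomial.mem_roots'.mpr ⟨hq'0, hx⟩
        calc (T.filter fun x =>
            MvPolynomial.eval (fun j => (((Fin.cons x a' : Fin (n+1) → ℕ) j : ℕ) : K)) p = 0).card
            = Z.card := by
              rw [hZcard]
              congr 1
              refine Finset.filter_congr fun x _ => ?_
              rw [heval x a']
          _ ≤ q'.natDegree := Polynomial.card_le_degree_of_subset_roots hZroots
          _ ≤ k := hdeg
    -- assemble
    set N := F.filter fun a' =>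
      MvPolynomial.eval (fun j => ((a' j : ℕ) : K)) (q.coeff k) = 0 with hNdef
    have hsum : ∑ a' ∈ F, (T.filter fun x =>
            MvPolynomial.eval (fun j => (((Fin.cons x a' : Fin (n+1) → ℕ) j : ℕ) : K)) p = 0).card
          ≤ N.card * s + F.card * k := by
      calc ∑ a' ∈ F, (T.filter fun x =>
            MvPolynomial.eval (fun j => (((Fin.cons x a' : Fin (n+1) → ℕ) j : ℕ) : K)) p = 0).card
          ≤ ∑ a' ∈ F, (if MvPolynomial.eval (fun j => ((a' j : ℕ) : K)) (q.coeff k) = 0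
              then s else k) := Finset.sum_le_sum hpoint
        _ = N.card * s + (F.filter fun a' =>
              ¬ MvPolynomial.eval (fun j => ((a' j : ℕ) : K)) (q.coeff k) = 0).card * k := by
            rw [Finset.sum_ite]
            simp [hNdef, mul_comm]
        _ ≤ N.card * s + F.card * k := by
            exact Nat.add_le_add_left (Nat.mul_le_mul (Finset.card_filter_le _ _) le_rfl) _
    have hN : N.card * s ≤ (q.coeff k).totalDegree * s ^ n := ih (q.coeff k) hlc T
    have hdegsum : (q.coeff k).totalDegree + k ≤ p.totalDegree :=
      totalDegree_coeff_finSuccEquiv_add_le p k hlc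
    calc ((Fintype.piFinset fun _ : Fin (n + 1) => T).filter
        fun a => MvPolynomial.eval (fun j => ((a j : ℕ) : K)) p = 0).card * s
        ≤ (N.card * s + F.card * k) * s := by
          rw [hcount]; exact Nat.mul_le_mul_right s hsum
      _ = N.card * s * s + s ^ n * k * s := by rw [hFcard, Nat.add_mul]
      _ ≤ (q.coeff k).totalDegree * s ^ n * s + s ^ n * k * s := by gcongr
      _ = ((q.coeff k).totalDegree + k) * s ^ (n + 1) := by ring
      _ ≤ p.totalDegree * s ^ (n + 1) := by gcongr

private lemma prod_X_eq_monomial_sum {K : Type*} [Field K] {n : ℕ} (S : Finset (Fin n)) :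
    (∏ j ∈ S, X j : MvPolynomial (Fin n) K)
      = monomial (∑ j ∈ S, Finsupp.single j 1) 1 := by
  induction S using Finset.induction with
  | empty => simp
  | @insert a S ha ih =>
    rw [Finset.prod_insert ha, Finset.sum_insert ha, ih, X, monomial_mul, one_mul]

private lemma sum_single_apply {n : ℕ} (S : Finset (Fin n)) (i : Fin n) :
    (∑ j ∈ S, Finsupp.single j (1 : ℕ)) i = if i ∈ S then 1 else 0 := by
  rw [Finset.sum_apply']
  simp [Finsupp.single_apply, Finset.sum_ite_eq]

private lemma sum_single_inj {n : ℕ} {S S' : Finset (Fin n)}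
    (h : (∑ j ∈ S, Finsupp.single j (1 : ℕ)) = ∑ j ∈ S', Finsupp.single j 1) : S = S' := by
  ext i
  have h2 := DFunLike.congr_fun h i
  rw [sum_single_apply, sum_single_apply] at h2
  by_cases hi : i ∈ S <;> by_cases hi' : i ∈ S' <;> simp [hi, hi'] at h2 ⊢

private lemma gPoly_coeff {K : Type*} [Field K] (r n d : ℕ)
    (M₁ M₂ : Matrix (Fin r) (Fin n) K) (W : Matrix (Fin d) (Fin n) ℕ)
    (u : Fin d → ℕ) (S₀ : Finset (Fin n)) (hS₀card : S₀.card = r)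
    (hS₀u : ∀ i, (∑ j ∈ S₀, W i j) = u i) :
    MvPolynomial.coeff (∑ j ∈ S₀, Finsupp.single j 1) (gPoly r n d M₁ M₂ W u)
      = (M₁.submatrix id fun k => ((S₀.orderIsoOfFin hS₀card) k : Fin n)).det *
        (M₂.submatrix id fun k => ((S₀.orderIsoOfFin hS₀card) k : Fin n)).det := by
  have hmem : S₀ ∈ Finset.powersetCard r (Finset.univ : Finset (Fin n)) :=
    Finset.mem_powersetCard.mpr ⟨Finset.subset_univ _, hS₀card⟩
  rw [gPoly, MvPolynomial.coeff_sum]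
  rw [Finset.sum_eq_single_of_mem (⟨S₀, hmem⟩ :
      {x // x ∈ Finset.powersetCard r (Finset.univ : Finset (Fin n))})
      (Finset.mem_attach _ _) ?_]
  · rw [if_pos hS₀u, prod_X_eq_monomial_sum, coeff_C_mul, coeff_monomial, if_pos rfl, mul_one]
  · intro b _ hb
    split_ifs
    · rw [prod_X_eq_monomial_sum, coeff_C_mul, coeff_monomial, if_neg, mul_zero]
      intro hEq
      exact hb (Subtype.ext (sum_single_inj hEq))
    · simp

private lemma gPoly_totalDegree {K : Type*} [Field K] (r n d : ℕ)
    (M₁ M₂ : Matrix (Fin r) (Fin n) K) (W : Matrix (Fin d) (Fin n) ℕ)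
    (u : Fin d → ℕ) : (gPoly r n d M₁ M₂ W u).totalDegree ≤ r := by
  refine (totalDegree_finset_sum _ _).trans (Finset.sup_le fun S _ => ?_)
  split_ifs with h
  · refine (totalDegree_mul _ _).trans ?_
    rw [totalDegree_C, zero_add]
    refine (totalDegree_finset_prod _ _).trans (le_of_eq ?_)
    calc ∑ j ∈ S.1, (X j : MvPolynomial (Fin n) K).totalDegree
        = ∑ _j ∈ S.1, 1 := by simp [totalDegree_X]
      _ = S.1.card := by simp
      _ = r := (Finset.mem_powersetCard.mp S.2).2
  · simp

/-- Schwartz–Zippel bound (Proposition 5 of the paper): if some common base `S₀` has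
`W`-image `u`, then the number of substitutions `a ∈ {1,…,s}^n` for which `g_u(a) = 0`
is at most `(r/s)·sⁿ`, i.e. `#{a : g_u(a) = 0} · s ≤ r · sⁿ`. Equivalently, for
independent uniform `a_j ∈ {1,…,s}`, the probability that `g_u(a) = 0` is at most `r/s`. -/
theorem gPoly_vanishing_count
    {K : Type*} [Field K] [CharZero K] [DecidableEq K] (r n d : ℕ)
    (M₁ M₂ : Matrix (Fin r) (Fin n) K) (W : Matrix (Fin d) (Fin n) ℕ)
    (u : Fin d → ℕ) (s : ℕ) (hs : 0 < s)
    (S₀ : Finset (Fin n)) (hS₀card : S₀.card = r)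
    (hS₀det :
      (M₁.submatrix id fun k => ((S₀.orderIsoOfFin hS₀card) k : Fin n)).det *
        (M₂.submatrix id fun k => ((S₀.orderIsoOfFin hS₀card) k : Fin n)).det ≠ 0)
    (hS₀u : ∀ i, (∑ j ∈ S₀, W i j) = u i) :
    ((Fintype.piFinset fun _ : Fin n => Finset.Icc 1 s).filter fun a =>
        MvPolynomial.eval (fun j => ((a j : ℕ) : K)) (gPoly r n d M₁ M₂ W u) = 0).card * s ≤
      r * s ^ n := by
  have hp : gPoly r n d M₁ M₂ W u ≠ 0 := by
    intro h
    exact hS₀det (by rw [← gPoly_coeff r n d M₁ M₂ W u S₀ hS₀card hS₀u, h, coeff_zero])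
  have hsz := schwartz_zippel n (gPoly r n d M₁ M₂ W u) hp (Finset.Icc 1 s)
  rw [Nat.card_Icc, Nat.add_sub_cancel] at hsz
  exact hsz.trans (Nat.mul_le_mul (gPoly_totalDegree r n d M₁ M₂ W u) le_rfl)
end
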